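/- Let {(x_μ, y_μ)}_{μ=1}^P be a symmetric dataset with s = ‖β‖ and Σ = (1/P)∑_μ x_μx_μᵀ. Fix α ∈ [0,1], σ(z) = max(z, αz), and the convention σ'(z) = 1 for z > 0, σ'(z) = α for z ≤ 0. Let τ > 0 and suppose W₁ : [0,∞) → ℝ^{H×D}, W₂ : [0,∞) → ℝ^{1×H} are differentiable and satisfy the square-loss gradient flow τ·Ẇ₁ = (1/P)∑_μ σ'(W₁x_μ) ⊙ W₂ᵀ(y_μ − W₂σ(W₁x_μ))x_μᵀ and τ·Ẇ₂ = (1/P)∑_μ (y_μ − W₂σ(W₁x_μ))·σ(W₁x_μ)ᵀ. Set u(t) = max(‖W₁(t)‖, ‖W₂(t)‖) (Frobenius norms) and w_init = u(0), and assume w_init < 1. Then for all t with 0 ≤ t < (τ/(s + Tr Σ))·ln(1/w_init), one has u(t) ≤ w_init·e^{(s + Tr Σ)·t/τ}. -/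

import Mathlib

open Matrix

/-- Frobenius norm of a real matrix. -/
noncomputable def frob {m n : ℕ} (M : Matrix (Fin m) (Fin n) ℝ) : ℝ :=
  Real.sqrt (∑ i, ∑ j, M i j ^ 2)

/-- Euclidean norm of a real vector. -/
noncomputable def vnorm {n : ℕ} (v : Fin n → ℝ) : ℝ :=
  Real.sqrt (∑ i, v i ^ 2)

/-!
Under the flow, `‖W₁‖²` and `‖W₂‖²` have the same derivative `(2/(τP)) ∑_μ (y_μ - f_μ) f_μ`,
`f_μ` the network output (Euler's identity for the positively homogeneous `σ`). Hence
`‖W₂‖² - ‖W₁‖²` is conserved and `u² = max (‖W₁‖², ‖W₂‖²)` is `‖W₁‖²` plus a constant.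
Dropping `-f_μ²`, the derivative is at most `(2/(τP)) ∑_μ y_μ f_μ`; the symmetry
`(x, y) ↦ (-x, -y)` replaces `σ` there by its odd part `(1 + α)/2 · id`, which leaves
`(1 + α)/τ · W₂ W₁ β ≤ (2s/τ) u²`. Grönwall gives `u(t) ≤ w_init e^{st/τ}`, and `Tr Σ ≥ 0`.
-/

open Finset

section Norms

variable {m n : ℕ}

lemma frob_nonneg (M : Matrix (Fin m) (Fin n) ℝ) : 0 ≤ frob M := Real.sqrt_nonneg _

lemma vnorm_nonneg (v : Fin n → ℝ) : 0 ≤ vnorm v := Real.sqrt_nonneg _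

lemma frob_sq (M : Matrix (Fin m) (Fin n) ℝ) : frob M ^ 2 = ∑ i, ∑ j, M i j ^ 2 :=
  Real.sq_sqrt (by positivity)

lemma vnorm_sq (v : Fin n → ℝ) : vnorm v ^ 2 = ∑ i, v i ^ 2 :=
  Real.sq_sqrt (by positivity)

lemma abs_dotProduct_le (v w : Fin n → ℝ) : |v ⬝ᵥ w| ≤ vnorm v * vnorm w :=
  abs_le_of_sq_le_sq (by rw [mul_pow, vnorm_sq, vnorm_sq]; exact sum_mul_sq_le_sq_mul_sq _ _ _)
    (mul_nonneg (vnorm_nonneg v) (vnorm_nonneg w))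

lemma vnorm_mulVec_le (M : Matrix (Fin m) (Fin n) ℝ) (v : Fin n → ℝ) :
    vnorm (M *ᵥ v) ≤ frob M * vnorm v := by
  refine (pow_le_pow_iff_left₀ (vnorm_nonneg _)
    (mul_nonneg (frob_nonneg M) (vnorm_nonneg v)) two_ne_zero).1 ?_
  rw [mul_pow, vnorm_sq, frob_sq, sum_mul]
  refine sum_le_sum fun i _ => ?_
  rw [← vnorm_sq, ← mul_pow, ← sq_abs]
  exact pow_le_pow_left₀ (abs_nonneg _) (abs_dotProduct_le (M i) v) 2

end Norms

noncomputable def leakyRelu (α z : ℝ) : ℝ := max z (α * z)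

noncomputable def leakyReluDeriv (α z : ℝ) : ℝ := if 0 < z then 1 else α

lemma leakyReluDeriv_mul_self {α : ℝ} (hα : α ≤ 1) (z : ℝ) :
    leakyReluDeriv α z * z = leakyRelu α z := by
  unfold leakyReluDeriv leakyRelu
  split_ifs with hz
  · rw [one_mul, max_eq_left (by nlinarith)]
  · rw [max_eq_right (by nlinarith)]

lemma leakyRelu_sub_leakyRelu_neg (α z : ℝ) :
    leakyRelu α z - leakyRelu α (-z) = (1 + α) * z := by
  unfold leakyRelu
  rw [mul_neg, max_neg_neg, sub_neg_eq_add, add_comm, min_add_max]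
  ring

section Network

variable {ι m n : Type*} [Fintype ι] [Fintype m] [Fintype n]

noncomputable def netOutput (α : ℝ) (W1 : Matrix m n ℝ) (W2 : m → ℝ) (v : n → ℝ) : ℝ :=
  ∑ h, W2 h * leakyRelu α ((W1 *ᵥ v) h)

lemma sum_mul_leakyRelu_of_odd (π : Equiv.Perm ι) {y z : ι → ℝ}
    (hy : ∀ μ, y (π μ) = -y μ) (hz : ∀ μ, z (π μ) = -z μ) (α : ℝ) :
    ∑ μ, y μ * leakyRelu α (z μ) = (1 + α) / 2 * ∑ μ, y μ * z μ := by
  have hreindex : ∑ μ, y μ * leakyRelu α (z μ) = ∑ μ, -(y μ * leakyRelu α (-z μ)) := by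
    rw [← Equiv.sum_comp π]
    simp only [hy, hz, neg_mul]
  have hsum : 2 * ∑ μ, y μ * leakyRelu α (z μ) = (1 + α) * ∑ μ, y μ * z μ := by
    conv_lhs => rw [two_mul]; arg 2; rw [hreindex]
    rw [← sum_add_distrib, mul_sum]
    refine sum_congr rfl fun μ _ => ?_
    linear_combination y μ * leakyRelu_sub_leakyRelu_neg α (z μ)
  linarith

lemma mul_sum_mul_netOutput_of_symmetric {x : ι → n → ℝ} {y : ι → ℝ} (π : Equiv.Perm ι)
    (hπ : ∀ μ, x (π μ) = -x μ ∧ y (π μ) = -y μ) (α c : ℝ) (W1 : Matrix m n ℝ) (W2 : m → ℝ) :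
    c * ∑ μ, y μ * netOutput α W1 W2 (x μ)
      = (1 + α) / 2 * (W2 ⬝ᵥ W1 *ᵥ (c • ∑ μ, y μ • x μ)) := by
  have hodd : ∀ h, ∑ μ, y μ * leakyRelu α ((W1 *ᵥ x μ) h)
      = (1 + α) / 2 * ∑ μ, y μ * (W1 *ᵥ x μ) h := fun h =>
    sum_mul_leakyRelu_of_odd π (fun μ => (hπ μ).2)
      (fun μ => by rw [(hπ μ).1, mulVec_neg, Pi.neg_apply]) α
  calc c * ∑ μ, y μ * netOutput α W1 W2 (x μ)
      = ∑ h, W2 h * (c * ∑ μ, y μ * leakyRelu α ((W1 *ᵥ x μ) h)) := by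
        simp only [netOutput, mul_sum]
        rw [sum_comm]
        exact sum_congr rfl fun _ _ => sum_congr rfl fun _ _ => by ring
    _ = (1 + α) / 2 * (W2 ⬝ᵥ W1 *ᵥ (c • ∑ μ, y μ • x μ)) := by
        simp only [hodd, mulVec_smul, mulVec_sum, dotProduct, mul_sum, Pi.smul_apply,
          Finset.sum_apply, smul_eq_mul]
        exact sum_congr rfl fun _ _ => sum_congr rfl fun _ _ => by ring

/-- For residuals `r μ = y μ - netOutput α W1 W2 (x μ)`, `firstLayerGrad` and `secondLayerGrad`
are minus the gradients in `W1` and `W2` of `½ ∑ μ (r μ)²`. -/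
noncomputable def firstLayerGrad (α : ℝ) (W1 : Matrix m n ℝ) (W2 : m → ℝ) (x : ι → n → ℝ)
    (r : ι → ℝ) : Matrix m n ℝ :=
  of fun h j => ∑ μ, leakyReluDeriv α ((W1 *ᵥ x μ) h) * (W2 h * r μ) * x μ j

noncomputable def secondLayerGrad (α : ℝ) (W1 : Matrix m n ℝ) (x : ι → n → ℝ) (r : ι → ℝ) :
    m → ℝ :=
  fun h => ∑ μ, r μ * leakyRelu α ((W1 *ᵥ x μ) h)

lemma sum_sum_mul_firstLayerGrad {α : ℝ} (hα : α ≤ 1) (W1 : Matrix m n ℝ) (W2 : m → ℝ)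
    (x : ι → n → ℝ) (r : ι → ℝ) :
    ∑ h, ∑ j, W1 h j * firstLayerGrad α W1 W2 x r h j = ∑ μ, r μ * netOutput α W1 W2 (x μ) := by
  calc ∑ h, ∑ j, W1 h j * firstLayerGrad α W1 W2 x r h j
      = ∑ h, ∑ μ, leakyReluDeriv α ((W1 *ᵥ x μ) h) * (W2 h * r μ) * (W1 *ᵥ x μ) h := by
        refine sum_congr rfl fun h _ => ?_
        simp only [firstLayerGrad, of_apply, mulVec, dotProduct, mul_sum]
        rw [sum_comm]
        exact sum_congr rfl fun _ _ => sum_congr rfl fun _ _ => by ring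
    _ = ∑ μ, r μ * netOutput α W1 W2 (x μ) := by
        simp only [netOutput, ← leakyReluDeriv_mul_self hα, mul_sum]
        rw [sum_comm]
        exact sum_congr rfl fun _ _ => sum_congr rfl fun _ _ => by ring

lemma sum_mul_secondLayerGrad (α : ℝ) (W1 : Matrix m n ℝ) (W2 : m → ℝ) (x : ι → n → ℝ)
    (r : ι → ℝ) :
    ∑ h, W2 h * secondLayerGrad α W1 x r h = ∑ μ, r μ * netOutput α W1 W2 (x μ) := by
  simp only [secondLayerGrad, netOutput, mul_sum]
  rw [sum_comm]
  exact sum_congr rfl fun _ _ => sum_congr rfl fun _ _ => by ring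

end Network

section Flow

variable {ι : Type*} [Fintype ι] {H D : ℕ}

lemma hasDerivAt_frob_sq {W : ℝ → Matrix (Fin H) (Fin D) ℝ} {W' : Matrix (Fin H) (Fin D) ℝ}
    {t : ℝ} (hW : ∀ h j, HasDerivAt (fun u => W u h j) (W' h j) t) :
    HasDerivAt (fun u => frob (W u) ^ 2) (2 * ∑ h, ∑ j, W t h j * W' h j) t := by
  simp only [frob_sq, mul_sum]
  refine HasDerivAt.fun_sum fun h _ => HasDerivAt.fun_sum fun j _ => ?_
  exact ((hW h j).fun_pow 2).congr_deriv (by ring)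

lemma hasDerivAt_vnorm_sq {v : ℝ → Fin H → ℝ} {v' : Fin H → ℝ} {t : ℝ}
    (hv : ∀ h, HasDerivAt (fun u => v u h) (v' h) t) :
    HasDerivAt (fun u => vnorm (v u) ^ 2) (2 * ∑ h, v t h * v' h) t := by
  simp only [vnorm_sq, mul_sum]
  refine HasDerivAt.fun_sum fun h _ => ?_
  exact ((hv h).fun_pow 2).congr_deriv (by ring)

variable {α η t : ℝ} {W1 : ℝ → Matrix (Fin H) (Fin D) ℝ} {W2 : ℝ → Fin H → ℝ}
  {x : ι → Fin D → ℝ} {r : ι → ℝ}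

lemma hasDerivAt_frob_sq_of_flow (hα : α ≤ 1)
    (hW1 : ∀ h j, HasDerivAt (fun u => W1 u h j)
      (η * firstLayerGrad α (W1 t) (W2 t) x r h j) t) :
    HasDerivAt (fun u => frob (W1 u) ^ 2)
      (2 * η * ∑ μ, r μ * netOutput α (W1 t) (W2 t) (x μ)) t := by
  convert hasDerivAt_frob_sq hW1 using 1
  simp only [mul_left_comm _ η, ← mul_sum, sum_sum_mul_firstLayerGrad hα]
  ring

lemma hasDerivAt_vnorm_sq_of_flow
    (hW2 : ∀ h, HasDerivAt (fun u => W2 u h) (η * secondLayerGrad α (W1 t) x r h) t) :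
    HasDerivAt (fun u => vnorm (W2 u) ^ 2)
      (2 * η * ∑ μ, r μ * netOutput α (W1 t) (W2 t) (x μ)) t := by
  convert hasDerivAt_vnorm_sq hW2 using 1
  simp only [mul_left_comm _ η, ← mul_sum, sum_mul_secondLayerGrad]
  ring

end Flow

lemma mul_sum_residual_mul_netOutput_le {ι : Type*} [Fintype ι] {H D : ℕ} {x : ι → Fin D → ℝ}
    {y : ι → ℝ} (π : Equiv.Perm ι) (hπ : ∀ μ, x (π μ) = -x μ ∧ y (π μ) = -y μ) {α : ℝ}
    (hα : α ∈ Set.Icc (0 : ℝ) 1) {c : ℝ} (hc : 0 ≤ c) (W1 : Matrix (Fin H) (Fin D) ℝ)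
    (W2 : Fin H → ℝ) :
    c * ∑ μ, (y μ - netOutput α W1 W2 (x μ)) * netOutput α W1 W2 (x μ)
      ≤ vnorm (c • ∑ μ, y μ • x μ) * (frob W1 * vnorm W2) := by
  set β := c • ∑ μ, y μ • x μ
  set z := W2 ⬝ᵥ W1 *ᵥ β
  calc c * ∑ μ, (y μ - netOutput α W1 W2 (x μ)) * netOutput α W1 W2 (x μ)
      ≤ c * ∑ μ, y μ * netOutput α W1 W2 (x μ) :=
        mul_le_mul_of_nonneg_left (sum_le_sum fun μ _ => by
          nlinarith [sq_nonneg (netOutput α W1 W2 (x μ))]) hc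
    _ = (1 + α) / 2 * z := mul_sum_mul_netOutput_of_symmetric π hπ α c W1 W2
    _ ≤ |z| := by nlinarith [le_abs_self z, neg_abs_le z, hα.1, hα.2]
    _ ≤ vnorm W2 * vnorm (W1 *ᵥ β) := abs_dotProduct_le _ _
    _ ≤ vnorm W2 * (frob W1 * vnorm β) :=
        mul_le_mul_of_nonneg_left (vnorm_mulVec_le _ _) (vnorm_nonneg _)
    _ = vnorm β * (frob W1 * vnorm W2) := by ring

lemma le_mul_exp_of_hasDerivAt_le {N N' : ℝ → ℝ} {K : ℝ} (hN : ∀ u, HasDerivAt N (N' u) u)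
    (hN' : ∀ u, N' u ≤ K * N u) {t : ℝ} (ht : 0 ≤ t) : N t ≤ N 0 * Real.exp (K * t) := by
  have h := le_gronwallBound_of_liminf_deriv_right_le (δ := N 0) (ε := 0) (b := t)
    (fun u _ => (hN u).continuousAt.continuousWithinAt)
    (fun u _ _ hr => (hN u).hasDerivWithinAt.liminf_right_slope_le hr) le_rfl
    (fun u _ => (hN' u).trans_eq (add_zero _).symm) t ⟨ht, le_rfl⟩
  rwa [sub_zero, gronwallBound_ε0] at h

lemma max_le_max_mul_exp_of_balanced {a b R : ℝ → ℝ} {K : ℝ} (hK : 0 ≤ K)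
    (ha : ∀ u, 0 ≤ a u) (hb : ∀ u, 0 ≤ b u)
    (hda : ∀ u, HasDerivAt (fun v => a v ^ 2) (R u) u)
    (hdb : ∀ u, HasDerivAt (fun v => b v ^ 2) (R u) u)
    (hR : ∀ u, R u ≤ 2 * K * (a u * b u)) {t : ℝ} (ht : 0 ≤ t) :
    max (a t) (b t) ≤ max (a 0) (b 0) * Real.exp (K * t) := by
  have hconst : ∀ u, b u ^ 2 - a u ^ 2 = b 0 ^ 2 - a 0 ^ 2 := fun u =>
    is_const_of_deriv_eq_zero (fun v => ((hdb v).sub (hda v)).differentiableAt)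
      (fun v => by rw [((hdb v).sub (hda v)).deriv, sub_self]) u 0
  -- `max a b ^ 2` is `a ^ 2` plus a constant, hence differentiable
  set N : ℝ → ℝ := fun u => a u ^ 2 + max 0 (b 0 ^ 2 - a 0 ^ 2)
  have hN : ∀ u, N u = max (a u) (b u) ^ 2 := fun u => by
    have hu := hconst u
    show a u ^ 2 + max 0 (b 0 ^ 2 - a 0 ^ 2) = _
    rcases le_total (a u) (b u) with hab | hab
    · rw [max_eq_right hab, max_eq_right (by nlinarith [mul_le_mul hab hab (ha u) (hb u)])]
      linarith
    · rw [max_eq_left hab, max_eq_left (by nlinarith [mul_le_mul hab hab (hb u) (ha u)])]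
      linarith
  have hNR : ∀ u, R u ≤ 2 * K * N u := fun u => by
    refine (hR u).trans (mul_le_mul_of_nonneg_left ?_ (by positivity))
    rw [hN, sq]
    exact mul_le_mul (le_max_left _ _) (le_max_right _ _) (hb u) ((ha u).trans (le_max_left _ _))
  have hgron : N t ≤ N 0 * Real.exp (2 * K * t) :=
    le_mul_exp_of_hasDerivAt_le (fun u => (hda u).add_const _) hNR ht
  rw [hN, hN, show 2 * K * t = K * t + K * t by ring, Real.exp_add] at hgron
  refine (pow_le_pow_iff_left₀ ((ha t).trans (le_max_left _ _))
    (mul_nonneg ((ha 0).trans (le_max_left _ _)) (Real.exp_pos _).le) two_ne_zero).1 ?_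
  linear_combination hgron

lemma trace_smul_sum_outer_nonneg {ι n : Type*} [Fintype ι] [Fintype n] {c : ℝ} (hc : 0 ≤ c)
    (x : ι → n → ℝ) : 0 ≤ trace (c • ∑ μ, of fun i j => x μ i * x μ j) := by
  rw [trace_smul, trace_sum, smul_eq_mul]
  refine mul_nonneg hc (sum_nonneg fun μ _ => sum_nonneg fun i _ => ?_)
  exact mul_self_nonneg (x μ i)

theorem stmt_8_general (D P H : ℕ) (x : Fin P → Fin D → ℝ) (y : Fin P → ℝ)
    (hsym : ∃ π : Equiv.Perm (Fin P), ∀ μ, x (π μ) = -x μ ∧ y (π μ) = -y μ)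
    (α : ℝ) (hα : α ∈ Set.Icc (0 : ℝ) 1) (τ : ℝ) (hτ : 0 < τ)
    (β : Fin D → ℝ) (hβ : β = (P : ℝ)⁻¹ • ∑ μ, y μ • x μ)
    (s : ℝ) (hs : s = vnorm β)
    (Sig : Matrix (Fin D) (Fin D) ℝ)
    (hSig : Sig = (P : ℝ)⁻¹ • ∑ μ, Matrix.of fun i j => x μ i * x μ j)
    (W1 : ℝ → Matrix (Fin H) (Fin D) ℝ) (W2 : ℝ → Fin H → ℝ)
    (hW1 : ∀ h j t, HasDerivAt (fun u => W1 u h j)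
      (τ⁻¹ * ((P : ℝ)⁻¹ * ∑ μ,
        (if 0 < (W1 t *ᵥ x μ) h then (1 : ℝ) else α) *
          (W2 t h * (y μ - ∑ h', W2 t h' *
            max ((W1 t *ᵥ x μ) h') (α * (W1 t *ᵥ x μ) h'))) * x μ j)) t)
    (hW2 : ∀ h t, HasDerivAt (fun u => W2 u h)
      (τ⁻¹ * ((P : ℝ)⁻¹ * ∑ μ,
        (y μ - ∑ h', W2 t h' * max ((W1 t *ᵥ x μ) h') (α * (W1 t *ᵥ x μ) h')) *
          max ((W1 t *ᵥ x μ) h) (α * (W1 t *ᵥ x μ) h))) t)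
    (winit : ℝ) (hwinit : winit = max (frob (W1 0)) (vnorm (W2 0))) :
    ∀ t : ℝ, 0 ≤ t → t < (τ / (s + Sig.trace)) * Real.log (1 / winit) →
      max (frob (W1 t)) (vnorm (W2 t))
        ≤ winit * Real.exp ((s + Sig.trace) * t / τ) := by
  obtain ⟨π, hπ⟩ := hsym
  intro t ht _
  have hs0 : 0 ≤ s := hs ▸ vnorm_nonneg β
  have hSig0 : 0 ≤ Sig.trace := hSig ▸ trace_smul_sum_outer_nonneg (by positivity) x
  have hR : ∀ u, 2 * (τ⁻¹ * (P : ℝ)⁻¹) * ∑ μ, (y μ - netOutput α (W1 u) (W2 u) (x μ)) *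
      netOutput α (W1 u) (W2 u) (x μ) ≤ 2 * (s * τ⁻¹) * (frob (W1 u) * vnorm (W2 u)) := fun u => by
    have hcorr := mul_sum_residual_mul_netOutput_le π hπ hα (c := (P : ℝ)⁻¹) (by positivity)
      (W1 u) (W2 u)
    rw [← hβ, ← hs] at hcorr
    linarith [mul_le_mul_of_nonneg_left hcorr (by positivity : 0 ≤ 2 * τ⁻¹)]
  have hu := max_le_max_mul_exp_of_balanced (by positivity)
    (fun u => frob_nonneg (W1 u)) (fun u => vnorm_nonneg (W2 u))
    (fun u => hasDerivAt_frob_sq_of_flow hα.2 fun h j =>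
      (hW1 h j u).congr_deriv (mul_assoc _ _ _).symm)
    (fun u => hasDerivAt_vnorm_sq_of_flow fun h => (hW2 h u).congr_deriv (mul_assoc _ _ _).symm)
    hR ht
  rw [hwinit]
  refine hu.trans (mul_le_mul_of_nonneg_left (Real.exp_le_exp.2 ?_)
    ((frob_nonneg _).trans (le_max_left _ _)))
  rw [div_eq_mul_inv]
  nlinarith [mul_nonneg hSig0 ht, inv_pos.2 hτ]

/-- norm bound for the early phase of the square-loss gradient flow of a
two-layer bias-free leaky ReLU network on a symmetric dataset: with
u(t) = max(‖W₁(t)‖, ‖W₂(t)‖), w_init = u(0) < 1, s = ‖β‖, one has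
u(t) ≤ w_init·e^{(s + Tr Σ)t/τ} for 0 ≤ t < (τ/(s + Tr Σ))·ln(1/w_init). -/
theorem stmt_8 (D P H : ℕ) (x : Fin P → Fin D → ℝ) (y : Fin P → ℝ)
    (hsym : ∃ π : Equiv.Perm (Fin P), ∀ μ, x (π μ) = -x μ ∧ y (π μ) = -y μ)
    (α : ℝ) (hα : α ∈ Set.Icc (0 : ℝ) 1) (τ : ℝ) (hτ : 0 < τ)
    (β : Fin D → ℝ) (hβ : β = (P : ℝ)⁻¹ • ∑ μ, y μ • x μ)
    (s : ℝ) (hs : s = vnorm β)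
    (Sig : Matrix (Fin D) (Fin D) ℝ)
    (hSig : Sig = (P : ℝ)⁻¹ • ∑ μ, Matrix.of fun i j => x μ i * x μ j)
    (W1 : ℝ → Matrix (Fin H) (Fin D) ℝ) (W2 : ℝ → Fin H → ℝ)
    (hW1 : ∀ h j t, HasDerivAt (fun u => W1 u h j)
      (τ⁻¹ * ((P : ℝ)⁻¹ * ∑ μ,
        (if 0 < (W1 t *ᵥ x μ) h then (1 : ℝ) else α) *
          (W2 t h * (y μ - ∑ h', W2 t h' *
            max ((W1 t *ᵥ x μ) h') (α * (W1 t *ᵥ x μ) h'))) * x μ j)) t)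
    (hW2 : ∀ h t, HasDerivAt (fun u => W2 u h)
      (τ⁻¹ * ((P : ℝ)⁻¹ * ∑ μ,
        (y μ - ∑ h', W2 t h' * max ((W1 t *ᵥ x μ) h') (α * (W1 t *ᵥ x μ) h')) *
          max ((W1 t *ᵥ x μ) h) (α * (W1 t *ᵥ x μ) h))) t)
    (winit : ℝ) (hwinit : winit = max (frob (W1 0)) (vnorm (W2 0)))
    (hsmall : winit < 1) :
    ∀ t : ℝ, 0 ≤ t → t < (τ / (s + Sig.trace)) * Real.log (1 / winit) →
      max (frob (W1 t)) (vnorm (W2 t))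
        ≤ winit * Real.exp ((s + Sig.trace) * t / τ) :=
  stmt_8_general D P H x y hsym α hα τ hτ β hβ s hs Sig hSig W1 W2 hW1 hW2 winit hwinit
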